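/- arXiv:1501.02088 — 2 statements merged into one kernel-verified Lean document; each statement's English description precedes it below -/
import Mathlib

section
/- The set L²_s of slice functions in L² is a closed real-linear subspace of L². In particular, if a sequence (f_n) of slice functions in L² converges in L² norm to f ∈ L², then f (has a representative which) is a slice function. -/
open MeasureTheory Real Set
open scoped ENNReal

noncomputable section

instance : MeasurableSpace (Quaternion ℝ) := borel _
instance : BorelSpace (Quaternion ℝ) := ⟨rfl⟩

/-- The 2-sphere of imaginary units `S = {q ∈ ℍ : q² = -1}`. -/
def Sph : Set (Quaternion ℝ) := {q | q ^ 2 = -1}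

/-- `qexp t I = exp (t I) = cos t + (sin t) I`. -/
def qexp (t : ℝ) (I : Quaternion ℝ) : Quaternion ℝ :=
  Real.cos t • (1 : Quaternion ℝ) + Real.sin t • I

/-- A function on the unit sphere of `ℍ` is a *slice function* if it satisfies the
representation formula
`f(exp(tJ)) = ½[f(exp(tI)) + f(exp(-tI))] + (JI/2)[f(exp(-tI)) − f(exp(tI))]`
for all imaginary units `I, J` and all real `t`. -/
def IsSlice (f : Quaternion ℝ → Quaternion ℝ) : Prop :=
  ∀ I ∈ Sph, ∀ J ∈ Sph, ∀ t : ℝ,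
    f (qexp t J) =
      (f (qexp t I) + f (qexp (-t) I)) / 2 +
        (J * I / 2) * (f (qexp (-t) I) - f (qexp t I))

/-- `σ` is the rotation-invariant probability measure on the sphere `S` of imaginary
units (rotations of `S` are realized as conjugations by unit quaternions). -/
structure IsSphereMeasure (σ : Measure (Quaternion ℝ)) : Prop where
  prob : IsProbabilityMeasure σ
  supp : σ Sphᶜ = 0
  rotInv : ∀ u : Quaternion ℝ, ‖u‖ = 1 → Measure.map (fun q => u * q * u⁻¹) σ = σ

/-- Normalized Lebesgue measure `dt/2π` on `[0, 2π)`. -/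
def arcMeasure : Measure ℝ :=
  (ENNReal.ofReal (2 * π))⁻¹ • volume.restrict (Ico 0 (2 * π))

/-- The measure `Σ` on the unit sphere `∂B` of `ℍ`: the pushforward of `σ ⊗ dt/2π`
under `(I, t) ↦ exp (t I)`. -/
def bMeasure (σ : Measure (Quaternion ℝ)) : Measure (Quaternion ℝ) :=
  Measure.map (fun p : Quaternion ℝ × ℝ => qexp p.2 p.1) (σ.prod arcMeasure)

/-- The `n`-th Fourier coefficient of `f` on the slice circle through the
imaginary unit `I`: `(1/2π) ∫₀^{2π} exp(−ntI) f(exp(tI)) dt`. -/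
def fcoeff (f : Quaternion ℝ → Quaternion ℝ) (n : ℤ) (I : Quaternion ℝ) : Quaternion ℝ :=
  (2 * π)⁻¹ • ∫ t in Ico (0 : ℝ) (2 * π), qexp (-(n * t)) I * f (qexp t I)

/-- `Pφ` is (a representative of) the orthogonal projection of `φ ∈ L²(∂B, Σ; ℍ)` onto the
closed subspace `L²_s` of slice functions, for the real inner product
`⟨f, g⟩ = ∫ Re (conj g * f) dΣ`: `Pφ` is a slice function in `L²` and `φ - Pφ` is orthogonal
to every slice function in `L²`. -/
def IsProjection (σ : Measure (Quaternion ℝ)) (φ Pφ : Quaternion ℝ → Quaternion ℝ) : Prop :=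
  MemLp φ 2 (bMeasure σ) ∧ IsSlice Pφ ∧ MemLp Pφ 2 (bMeasure σ) ∧
    ∀ g : Quaternion ℝ → Quaternion ℝ, IsSlice g → MemLp g 2 (bMeasure σ) →
      ∫ q, (star (g q) * (φ q - Pφ q)).re ∂(bMeasure σ) = 0

/-! On the unit sphere a slice function has the form `q ↦ A q.re + q.im * B q.re`. An
`L²`-convergent sequence of slice functions has an a.e. convergent subsequence. Since `Σ` is
invariant under the rotations `q ↦ i q i⁻¹` and `q ↦ j q j⁻¹`, for almost every `q` with
`q.im ≠ 0` the subsequence also converges at a rotated point with the same real part and a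
different imaginary part; the values at these two points make the coefficients `A_k (q.re)` and
`B_k (q.re)` converge, and their limits define a slice function equal to the limit almost
everywhere. Closedness of `L²_s` follows sequentially. -/
open Filter Topology
open scoped Quaternion

lemma mem_Sph_iff {q : ℍ} : q ∈ Sph ↔ q.re = 0 ∧ Quaternion.normSq q = 1 := by
  refine ⟨fun h => ?_, fun ⟨hre, hn⟩ => ?_⟩
  · have hn : Quaternion.normSq q = 1 := by
      have h' := congrArg Quaternion.normSq h
      rw [map_pow, Quaternion.normSq_neg, map_one] at h'
      exact (pow_eq_one_iff_of_nonneg Quaternion.normSq_nonneg two_ne_zero).1 h'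
    refine ⟨(Quaternion.sq_eq_neg_normSq (a := q)).1 ?_, hn⟩
    rw [hn, Quaternion.coe_one]
    exact h
  · show q ^ 2 = -1
    rw [(Quaternion.sq_eq_neg_normSq (a := q)).2 hre, hn, Quaternion.coe_one]

lemma re_eq_zero_of_mem_Sph {I : ℍ} (hI : I ∈ Sph) : I.re = 0 := (mem_Sph_iff.1 hI).1

lemma qexp_re {I : ℍ} (hI : I ∈ Sph) (t : ℝ) : (qexp t I).re = cos t := by
  simp [qexp, re_eq_zero_of_mem_Sph hI]

lemma qexp_im {I : ℍ} (hI : I ∈ Sph) (t : ℝ) : (qexp t I).im = sin t • I := by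
  ext <;> simp [qexp, re_eq_zero_of_mem_Sph hI]

lemma norm_eq_one_of_normSq_eq_one {q : ℍ} (h : Quaternion.normSq q = 1) : ‖q‖ = 1 := by
  rw [Quaternion.normSq_eq_norm_mul_self] at h
  nlinarith [norm_nonneg q]

lemma normSq_eq_re_sq_add_normSq_im (q : ℍ) :
    Quaternion.normSq q = q.re ^ 2 + Quaternion.normSq q.im := by
  simp only [Quaternion.normSq_def', Quaternion.re_im, Quaternion.imI_im, Quaternion.imJ_im,
    Quaternion.imK_im]
  ring

lemma norm_qexp {I : ℍ} (hI : I ∈ Sph) (t : ℝ) : ‖qexp t I‖ = 1 := by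
  have h := normSq_eq_re_sq_add_normSq_im (qexp t I)
  rw [qexp_re hI, qexp_im hI, Quaternion.normSq_smul, (mem_Sph_iff.1 hI).2, mul_one,
    cos_sq_add_sin_sq] at h
  exact norm_eq_one_of_normSq_eq_one h

def quatI : ℍ := ⟨0, 1, 0, 0⟩

def quatJ : ℍ := ⟨0, 0, 1, 0⟩

lemma normSq_quatI : Quaternion.normSq quatI = 1 := by
  rw [Quaternion.normSq_def']; norm_num [quatI]

lemma normSq_quatJ : Quaternion.normSq quatJ = 1 := by
  rw [Quaternion.normSq_def']; norm_num [quatJ]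

lemma quatI_mem_Sph : quatI ∈ Sph := mem_Sph_iff.2 ⟨rfl, normSq_quatI⟩

lemma qexp_neg_of_sin_eq_zero {t : ℝ} (h : sin t = 0) (I : ℍ) : qexp (-t) I = qexp t I := by
  simp [qexp, h]

lemma exists_mem_Sph_im_eq_smul (q : ℍ) : ∃ I ∈ Sph, q.im = ‖q.im‖ • I := by
  rcases eq_or_ne q.im 0 with h | h
  · exact ⟨quatI, quatI_mem_Sph, by simp [h]⟩
  refine ⟨‖q.im‖⁻¹ • q.im, mem_Sph_iff.2 ⟨by simp, ?_⟩, ?_⟩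
  · rw [Quaternion.normSq_smul, Quaternion.normSq_eq_norm_mul_self, inv_pow]
    field_simp
  · rw [smul_smul, mul_inv_cancel₀ (norm_ne_zero_iff.2 h), one_smul]

lemma norm_im_eq_sin_arccos {q : ℍ} (hq : ‖q‖ = 1) : ‖q.im‖ = sin (arccos q.re) := by
  have h := normSq_eq_re_sq_add_normSq_im q
  rw [Quaternion.normSq_eq_norm_mul_self, Quaternion.normSq_eq_norm_mul_self, hq] at h
  rw [sin_arccos, ← Real.sqrt_mul_self (norm_nonneg q.im)]
  congr 1
  linarith

lemma eq_qexp_arccos {q : ℍ} (hq : ‖q‖ = 1) : ∃ I ∈ Sph, q = qexp (arccos q.re) I := by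
  obtain ⟨I, hI, him⟩ := exists_mem_Sph_im_eq_smul q
  have hre : |q.re| ≤ 1 := by
    have h := normSq_eq_re_sq_add_normSq_im q
    rw [Quaternion.normSq_eq_norm_mul_self, hq] at h
    nlinarith [abs_mul_abs_self q.re, abs_nonneg q.re, Quaternion.normSq_nonneg (a := q.im)]
  refine ⟨I, hI, ?_⟩
  rw [qexp, cos_arccos (abs_le.1 hre).1 (abs_le.1 hre).2, ← norm_im_eq_sin_arccos hq, ← him]
  ext <;> simp

/-- Coefficients read off the slice through `quatI`, so that a slice function is
`q ↦ sliceA f q.re + q.im * sliceB f q.re` on the unit sphere (`IsSlice.eq_sliceA_add_im_mul`).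
At `x = ±1` the factor `(sin (arccos x))⁻¹` in `sliceB` is the junk value `0⁻¹ = 0`. -/
def sliceA (f : ℍ → ℍ) (x : ℝ) : ℍ :=
  (f (qexp (arccos x) quatI) + f (qexp (-arccos x) quatI)) / 2

def sliceB (f : ℍ → ℍ) (x : ℝ) : ℍ :=
  (sin (arccos x))⁻¹ • (quatI / 2 * (f (qexp (-arccos x) quatI) - f (qexp (arccos x) quatI)))

lemma IsSlice.eq_sliceA_add_im_mul {f : ℍ → ℍ} (hf : IsSlice f) {q : ℍ} (hq : ‖q‖ = 1) :
    f q = sliceA f q.re + q.im * sliceB f q.re := by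
  obtain ⟨J, hJ, hqJ⟩ := eq_qexp_arccos hq
  have him : q.im = sin (arccos q.re) • J := by
    conv_lhs => rw [hqJ]
    exact qexp_im hJ _
  rw [him, sliceA, sliceB]
  set t := arccos q.re
  calc f q = f (qexp t J) := congrArg f hqJ
    _ = _ := hf quatI quatI_mem_Sph J hJ t
    _ = _ := by
      rcases eq_or_ne (sin t) 0 with hsin | hsin
      · simp [qexp_neg_of_sin_eq_zero hsin]
      · rw [smul_mul_smul_comm, mul_inv_cancel₀ hsin, one_smul, mul_div_assoc, mul_assoc]

lemma div_two_eq_inv_two_smul (a : ℍ) : a / 2 = (2⁻¹ : ℝ) • a := by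
  rw [div_eq_mul_inv, ← Quaternion.mul_coe_eq_smul, Quaternion.coe_inv]
  rfl

lemma isSlice_re_add_im_mul (A B : ℝ → ℍ) : IsSlice (fun q => A q.re + q.im * B q.re) := by
  intro I hI J hJ t
  simp only [qexp_re hI, qexp_re hJ, qexp_im hI, qexp_im hJ, cos_neg, sin_neg]
  have key : J * I * (I * B (cos t)) = -(J * B (cos t)) := by
    rw [mul_assoc, ← mul_assoc I I, ← sq, hI]
    simp
  simp only [div_two_eq_inv_two_smul, smul_mul_assoc, neg_mul, neg_smul, mul_sub, mul_add,
    mul_neg, mul_smul_comm, key]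
  module

lemma IsSlice.add {f g : ℍ → ℍ} (hf : IsSlice f) (hg : IsSlice g) : IsSlice (f + g) := by
  intro I hI J hJ t
  simp only [Pi.add_apply, hf I hI J hJ t, hg I hI J hJ t, div_two_eq_inv_two_smul, smul_add,
    mul_add, mul_sub]
  module

lemma IsSlice.smul {f : ℍ → ℍ} (hf : IsSlice f) (c : ℝ) : IsSlice (c • f) := by
  intro I hI J hJ t
  simp only [Pi.smul_apply, hf I hI J hJ t, div_two_eq_inv_two_smul, smul_add, smul_sub, mul_sub,
    mul_smul_comm, smul_smul]
  module

lemma isSlice_zero : IsSlice 0 := by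
  intro I _ J _ t
  simp

lemma conj_qexp {u : ℍ} (hu : u ≠ 0) (t : ℝ) (I : ℍ) :
    u * qexp t I * u⁻¹ = qexp t (u * I * u⁻¹) := by
  simp only [qexp, mul_add, add_mul, mul_smul_comm, smul_mul_assoc, mul_one, mul_inv_cancel₀ hu]

lemma continuous_qexp_uncurry : Continuous (fun p : ℍ × ℝ => qexp p.2 p.1) := by
  unfold qexp
  fun_prop

instance : SFinite arcMeasure := by
  unfold arcMeasure
  infer_instance

lemma measurePreserving_conj_bMeasure {σ : Measure ℍ} [SFinite σ] {u : ℍ} (hu : u ≠ 0)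
    (hσu : Measure.map (fun q => u * q * u⁻¹) σ = σ) :
    MeasurePreserving (fun q => u * q * u⁻¹) (bMeasure σ) (bMeasure σ) := by
  have hconj : Measurable (fun q : ℍ => u * q * u⁻¹) := by fun_prop
  refine ⟨hconj, ?_⟩
  have hcomp : (fun q => u * q * u⁻¹) ∘ (fun p : ℍ × ℝ => qexp p.2 p.1) =
      (fun p : ℍ × ℝ => qexp p.2 p.1) ∘ Prod.map (fun q => u * q * u⁻¹) id :=
    funext fun p => conj_qexp hu p.2 p.1
  rw [bMeasure, Measure.map_map hconj continuous_qexp_uncurry.measurable, hcomp,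
    ← Measure.map_map continuous_qexp_uncurry.measurable (hconj.prodMap measurable_id),
    ← Measure.map_prod_map _ _ hconj measurable_id, hσu, Measure.map_id]

lemma ae_norm_eq_one_bMeasure {σ : Measure ℍ} [SFinite σ] (hσ : σ Sphᶜ = 0) :
    ∀ᵐ q ∂bMeasure σ, ‖q‖ = 1 := by
  rw [bMeasure, ae_map_iff continuous_qexp_uncurry.aemeasurable
    (measurableSet_eq_fun continuous_norm.measurable measurable_const)]
  refine measure_mono_null (t := Sphᶜ ×ˢ univ)
    (fun p hp => ⟨fun hI => hp (norm_qexp hI p.2), trivial⟩) ?_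
  rw [Measure.prod_prod, hσ, zero_mul]

lemma norm_conj_of_norm_eq_one {u : ℍ} (hu : ‖u‖ = 1) (q : ℍ) : ‖u * q * u⁻¹‖ = ‖q‖ := by
  rw [norm_mul, norm_mul, norm_inv, hu, inv_one, one_mul, mul_one]

lemma conj_quatI (q : ℍ) : quatI * q * quatI⁻¹ = ⟨q.re, q.imI, -q.imJ, -q.imK⟩ := by
  rw [Quaternion.inv_def, normSq_quatI]
  ext <;> simp [Quaternion.re_mul, Quaternion.imI_mul, Quaternion.imJ_mul, Quaternion.imK_mul] <;>
    simp [quatI]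

lemma conj_quatJ (q : ℍ) : quatJ * q * quatJ⁻¹ = ⟨q.re, -q.imI, q.imJ, -q.imK⟩ := by
  rw [Quaternion.inv_def, normSq_quatJ]
  ext <;> simp [Quaternion.re_mul, Quaternion.imI_mul, Quaternion.imJ_mul, Quaternion.imK_mul] <;>
    simp [quatJ]

lemma im_eq_zero_of_conj_quatI_conj_quatJ {q : ℍ} (hI : (quatI * q * quatI⁻¹).im = q.im)
    (hJ : (quatJ * q * quatJ⁻¹).im = q.im) : q.im = 0 := by
  rw [conj_quatI] at hI
  rw [conj_quatJ] at hJ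
  have h1 : -q.imI = q.imI := congrArg QuaternionAlgebra.imI hJ
  have h2 : -q.imJ = q.imJ := congrArg QuaternionAlgebra.imJ hI
  have h3 : -q.imK = q.imK := congrArg QuaternionAlgebra.imK hI
  ext <;> simp <;> linarith

/-- `limUnder` is junk where the limits of the coefficients fail to exist. -/
def sliceLimit (F : ℕ → ℍ → ℍ) (q : ℍ) : ℍ :=
  limUnder atTop (fun k => sliceA (F k) q.re) + q.im * limUnder atTop (fun k => sliceB (F k) q.re)

lemma isSlice_sliceLimit (F : ℕ → ℍ → ℍ) : IsSlice (sliceLimit F) :=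
  isSlice_re_add_im_mul (fun x => limUnder atTop fun k => sliceA (F k) x)
    (fun x => limUnder atTop fun k => sliceB (F k) x)

lemma eq_sliceLimit_of_im_eq_zero {F : ℕ → ℍ → ℍ} (hF : ∀ k, IsSlice (F k)) {q a : ℍ}
    (hq : ‖q‖ = 1) (him : q.im = 0) (hFq : Tendsto (fun k => F k q) atTop (𝓝 a)) :
    a = sliceLimit F q := by
  have hA : ∀ k, F k q = sliceA (F k) q.re := fun k => by
    simpa [him] using (hF k).eq_sliceA_add_im_mul hq
  simp only [hA] at hFq
  rw [sliceLimit, him, zero_mul, add_zero, hFq.limUnder_eq]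

lemma eq_sliceLimit_of_tendsto_of_tendsto {F : ℕ → ℍ → ℍ} (hF : ∀ k, IsSlice (F k))
    {q p a b : ℍ} (hq : ‖q‖ = 1) (hp : ‖p‖ = 1) (hre : p.re = q.re) (him : q.im ≠ p.im)
    (hFq : Tendsto (fun k => F k q) atTop (𝓝 a)) (hFp : Tendsto (fun k => F k p) atTop (𝓝 b)) :
    a = sliceLimit F q := by
  have hFp_eq : ∀ k, F k p = sliceA (F k) q.re + p.im * sliceB (F k) q.re := fun k => by
    rw [(hF k).eq_sliceA_add_im_mul hp, hre]
  have hB : Tendsto (fun k => sliceB (F k) q.re) atTop (𝓝 ((q.im - p.im)⁻¹ * (a - b))) := by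
    have hB_eq : ∀ k, sliceB (F k) q.re = (q.im - p.im)⁻¹ * (F k q - F k p) := fun k => by
      rw [(hF k).eq_sliceA_add_im_mul hq, hFp_eq, add_sub_add_left_eq_sub, ← sub_mul,
        inv_mul_cancel_left₀ (sub_ne_zero.2 him)]
    simpa only [hB_eq] using (hFq.sub hFp).const_mul _
  have hA : Tendsto (fun k => sliceA (F k) q.re) atTop
      (𝓝 (a - q.im * ((q.im - p.im)⁻¹ * (a - b)))) := by
    have hA_eq : ∀ k, sliceA (F k) q.re = F k q - q.im * sliceB (F k) q.re := fun k => by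
      rw [(hF k).eq_sliceA_add_im_mul hq, add_sub_cancel_right]
    simpa only [hA_eq] using hFq.sub (hB.const_mul q.im)
  rw [sliceLimit, hA.limUnder_eq, hB.limUnder_eq, sub_add_cancel]

lemma ae_eq_sliceLimit {σ : Measure ℍ} (hσ : IsSphereMeasure σ) {F : ℕ → ℍ → ℍ} {g : ℍ → ℍ}
    (hF : ∀ k, IsSlice (F k))
    (hFg : ∀ᵐ q ∂bMeasure σ, Tendsto (fun k => F k q) atTop (𝓝 (g q))) :
    g =ᵐ[bMeasure σ] sliceLimit F := by
  have := hσ.prob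
  have hconj : ∀ u : ℍ, ‖u‖ = 1 → ∀ᵐ q ∂bMeasure σ,
      Tendsto (fun k => F k (u * q * u⁻¹)) atTop (𝓝 (g (u * q * u⁻¹))) := fun u hu =>
    (measurePreserving_conj_bMeasure (norm_ne_zero_iff.1 (hu.symm ▸ one_ne_zero))
      (hσ.rotInv u hu)).quasiMeasurePreserving.ae hFg
  have hI := norm_eq_one_of_normSq_eq_one normSq_quatI
  have hJ := norm_eq_one_of_normSq_eq_one normSq_quatJ
  filter_upwards [hFg, hconj quatI hI, hconj quatJ hJ, ae_norm_eq_one_bMeasure hσ.supp]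
    with q hq hqI hqJ hq1
  by_cases him : q.im = 0
  · exact eq_sliceLimit_of_im_eq_zero hF hq1 him hq
  by_cases himI : (quatI * q * quatI⁻¹).im = q.im
  · have himJ : q.im ≠ (quatJ * q * quatJ⁻¹).im := fun h =>
      him (im_eq_zero_of_conj_quatI_conj_quatJ himI h.symm)
    exact eq_sliceLimit_of_tendsto_of_tendsto hF hq1 (by rw [norm_conj_of_norm_eq_one hJ, hq1])
      (by rw [conj_quatJ]) himJ hq hqJ
  · exact eq_sliceLimit_of_tendsto_of_tendsto hF hq1 (by rw [norm_conj_of_norm_eq_one hI, hq1])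
      (by rw [conj_quatI]) (Ne.symm himI) hq hqI

lemma exists_isSlice_ae_eq_of_tendstoInMeasure {σ : Measure ℍ} (hσ : IsSphereMeasure σ)
    {f : ℕ → ℍ → ℍ} {g : ℍ → ℍ} (hf : ∀ n, IsSlice (f n))
    (hfg : TendstoInMeasure (bMeasure σ) f atTop g) :
    ∃ g' : ℍ → ℍ, IsSlice g' ∧ g =ᵐ[bMeasure σ] g' := by
  obtain ⟨ns, -, hns⟩ := hfg.exists_seq_tendsto_ae
  exact ⟨_, isSlice_sliceLimit _, ae_eq_sliceLimit hσ (fun k => hf (ns k)) hns⟩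

def sliceLp (σ : Measure ℍ) : Submodule ℝ (Lp ℍ 2 (bMeasure σ)) where
  carrier := {f | ∃ g, IsSlice g ∧ ⇑f =ᵐ[bMeasure σ] g}
  add_mem' := fun ⟨g₁, hg₁, h₁⟩ ⟨g₂, hg₂, h₂⟩ =>
    ⟨g₁ + g₂, hg₁.add hg₂, (Lp.coeFn_add _ _).trans (h₁.add h₂)⟩
  zero_mem' := ⟨0, isSlice_zero, Lp.coeFn_zero _ _ _⟩
  smul_mem' c _ := fun ⟨g, hg, h⟩ =>
    ⟨c • g, hg.smul c, (Lp.coeFn_smul _ _).trans (h.const_smul c)⟩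

lemma isClosed_sliceLp {σ : Measure ℍ} (hσ : IsSphereMeasure σ) :
    IsClosed (sliceLp σ : Set (Lp ℍ 2 (bMeasure σ))) := by
  refine IsSeqClosed.isClosed fun Fs F hFs hlim => ?_
  choose gs hgs hFg using hFs
  exact exists_isSlice_ae_eq_of_tendstoInMeasure hσ hgs
    ((tendstoInMeasure_of_tendsto_Lp hlim).congr_left hFg)

/-- The set `L²_s` of (a.e. representatives of) slice functions in
`L²(∂B, Σ; ℍ)` is a closed real-linear subspace of `L²`. In particular, if a sequence of
slice functions in `L²` converges in `L²` norm to `g ∈ L²`, then `g` has a representative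
which is a slice function. -/
theorem slice_L2_closed_subspace (σ : Measure (Quaternion ℝ)) (hσ : IsSphereMeasure σ) :
    (∃ S : Submodule ℝ (Lp (Quaternion ℝ) 2 (bMeasure σ)),
      IsClosed (S : Set (Lp (Quaternion ℝ) 2 (bMeasure σ))) ∧
      ∀ f : Lp (Quaternion ℝ) 2 (bMeasure σ),
        f ∈ S ↔ ∃ g : Quaternion ℝ → Quaternion ℝ, IsSlice g ∧ ⇑f =ᵐ[bMeasure σ] g) ∧
    ∀ (f : ℕ → Quaternion ℝ → Quaternion ℝ) (g : Quaternion ℝ → Quaternion ℝ),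
      (∀ n, IsSlice (f n)) → (∀ n, MemLp (f n) 2 (bMeasure σ)) →
      MemLp g 2 (bMeasure σ) →
      Filter.Tendsto (fun n => eLpNorm (f n - g) 2 (bMeasure σ)) Filter.atTop (nhds 0) →
      ∃ g' : Quaternion ℝ → Quaternion ℝ, IsSlice g' ∧ g =ᵐ[bMeasure σ] g' := by
  refine ⟨⟨sliceLp σ, isClosed_sliceLp hσ, fun _ => Iff.rfl⟩, fun f g hf hfLp hgLp hfg => ?_⟩
  exact exists_isSlice_ae_eq_of_tendstoInMeasure hσ hf
    (tendstoInMeasure_of_tendsto_eLpNorm two_ne_zero (fun n => (hfLp n).aestronglyMeasurable)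
      hgLp.aestronglyMeasurable hfg)
end
end

section
/- If f ∈ L² is a slice function, then for every n ∈ ℤ the n-th Fourier coefficient f̂(n) = (1/2π) ∫₀^{2π} exp(−ntI) f(exp(tI)) dt is independent of the choice of I ∈ S (for σ-almost every pair of imaginary units I, I' ∈ S for which the integrals are defined, the two integrals coincide). -/
open MeasureTheory Real Set
open scoped ENNReal

noncomputable section

/-! For a slice function the restriction to the circle through `J` is `α(t) + J β(t)` with `α`, `β`
independent of `J`, so the `n`-th Fourier integrand on that circle is `A(t) + J B(t)` with `A`, `B`
independent of `J`. Changing `J` therefore changes the integrand by `(J' - J) B(t)`, and `B` is odd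
under `t ↦ 2π - t`, so its integral over a period vanishes. -/

theorem integral_Ico_eq_zero_of_sub_eq_neg {E : Type*} [NormedAddCommGroup E] [NormedSpace ℝ E]
    {a : ℝ} (ha : 0 ≤ a) {w : ℝ → E} (hw : ∀ t, w (a - t) = -w t) :
    ∫ t in Ico 0 a, w t = 0 := by
  have : IsAddTorsionFree E := .of_isTorsionFree ℝ E
  rw [integral_Ico_eq_integral_Ioc, ← intervalIntegral.integral_of_le ha, ← self_eq_neg]
  calc ∫ t in 0..a, w t = ∫ t in 0..a, w (a - t) := by
        simp [intervalIntegral.integral_comp_sub_left]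
    _ = -∫ t in 0..a, w t := by simp only [hw, intervalIntegral.integral_neg]

theorem qexp_periodic (J : Quaternion ℝ) : Function.Periodic (qexp · J) (2 * π) := fun t => by
  simp [qexp]

theorem qexp_neg_mul_add_mul {J : Quaternion ℝ} (hJ : J ∈ Sph) (x : ℝ) (g h : Quaternion ℝ) :
    qexp (-x) J * (g + J * h) = (cos x • g + sin x • h) + J * (cos x • h - sin x • g) := by
  have hJJ : J * J = -1 := by rw [← sq]; exact hJ
  rw [qexp, cos_neg, sin_neg, neg_smul, ← sub_eq_add_neg]
  simp only [sub_mul, mul_add, smul_mul_assoc, one_mul, ← mul_assoc, hJJ, neg_one_mul, mul_sub,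
    mul_smul_comm]
  module

/-- The stem `(α, β)` of `f` along the circle through `I`, normalised so that
`f (qexp t J) = α t + J * β t` (see `IsSlice.apply_qexp`). -/
def stemFst (f : Quaternion ℝ → Quaternion ℝ) (I : Quaternion ℝ) (t : ℝ) : Quaternion ℝ :=
  (f (qexp t I) + f (qexp (-t) I)) / 2

def stemSnd (f : Quaternion ℝ → Quaternion ℝ) (I : Quaternion ℝ) (t : ℝ) : Quaternion ℝ :=
  I * (f (qexp (-t) I) - f (qexp t I)) / 2

theorem stemFst_two_pi_sub (f : Quaternion ℝ → Quaternion ℝ) (I : Quaternion ℝ) (t : ℝ) :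
    stemFst f I (2 * π - t) = stemFst f I t := by
  rw [stemFst, stemFst, neg_sub, (qexp_periodic I).sub_eq, (qexp_periodic I).sub_eq', add_comm]

theorem stemSnd_two_pi_sub (f : Quaternion ℝ → Quaternion ℝ) (I : Quaternion ℝ) (t : ℝ) :
    stemSnd f I (2 * π - t) = -stemSnd f I t := by
  rw [stemSnd, stemSnd, neg_sub, (qexp_periodic I).sub_eq, (qexp_periodic I).sub_eq',
    ← neg_sub, mul_neg, neg_div]

theorem IsSlice.apply_qexp {f : Quaternion ℝ → Quaternion ℝ} (hf : IsSlice f) {I J : Quaternion ℝ}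
    (hI : I ∈ Sph) (hJ : J ∈ Sph) (t : ℝ) :
    f (qexp t J) = stemFst f I t + J * stemSnd f I t := by
  simp only [hf I hI J hJ t, stemFst, stemSnd, div_eq_mul_inv, mul_assoc,
    (Commute.ofNat_right (f (qexp (-t) I) - f (qexp t I)) 2).inv_right₀.eq]

/-- The coefficient of `J` in the `n`-th Fourier integrand `qexp (-(n t)) J * f (qexp t J)`. -/
def fourierIntegrandSnd (f : Quaternion ℝ → Quaternion ℝ) (I : Quaternion ℝ) (n : ℤ) (t : ℝ) :
    Quaternion ℝ :=
  cos (n * t) • stemSnd f I t - sin (n * t) • stemFst f I t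

theorem fourierIntegrandSnd_two_pi_sub (f : Quaternion ℝ → Quaternion ℝ) (I : Quaternion ℝ)
    (n : ℤ) (t : ℝ) :
    fourierIntegrandSnd f I n (2 * π - t) = -fourierIntegrandSnd f I n t := by
  rw [fourierIntegrandSnd, fourierIntegrandSnd, stemFst_two_pi_sub, stemSnd_two_pi_sub, mul_sub,
    cos_int_mul_two_pi_sub, sin_int_mul_two_pi_sub, smul_neg, neg_smul, neg_sub, sub_neg_eq_add,
    neg_add_eq_sub]

theorem IsSlice.fourierIntegrand_sub {f : Quaternion ℝ → Quaternion ℝ} (hf : IsSlice f)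
    {I J J' : Quaternion ℝ} (hI : I ∈ Sph) (hJ : J ∈ Sph) (hJ' : J' ∈ Sph) (n : ℤ) (t : ℝ) :
    qexp (-(n * t)) J * f (qexp t J) - qexp (-(n * t)) J' * f (qexp t J') =
      (J - J') * fourierIntegrandSnd f I n t := by
  rw [hf.apply_qexp hI hJ, hf.apply_qexp hI hJ', qexp_neg_mul_add_mul hJ,
    qexp_neg_mul_add_mul hJ', fourierIntegrandSnd, sub_mul]
  abel

theorem fcoeff_indep_of_isSlice_general
    (f : Quaternion ℝ → Quaternion ℝ) (hslice : IsSlice f)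
    (n : ℤ) (I I' : Quaternion ℝ)
    (hI : I ∈ Sph) (hI' : I' ∈ Sph)
    (hint : IntegrableOn (fun t => qexp (-(n * t)) I * f (qexp t I))
      (Ico (0 : ℝ) (2 * π)) volume)
    (hint' : IntegrableOn (fun t => qexp (-(n * t)) I' * f (qexp t I'))
      (Ico (0 : ℝ) (2 * π)) volume) :
    fcoeff f n I = fcoeff f n I' := by
  rw [fcoeff, fcoeff, ← sub_eq_zero, ← smul_sub, ← integral_sub hint hint']
  simp_rw [hslice.fourierIntegrand_sub hI hI hI' n]
  rw [integral_Ico_eq_zero_of_sub_eq_neg (by positivity) fun t => by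
    rw [fourierIntegrandSnd_two_pi_sub, mul_neg], smul_zero]

/-- If `f ∈ L²(∂B, Σ; ℍ)` is a slice function, then for every `n ∈ ℤ` the
`n`-th Fourier coefficient `f̂(n) = (1/2π) ∫₀^{2π} exp(−ntI) f(exp(tI)) dt` is independent
of the imaginary unit `I ∈ S`: whenever the defining integrals for two imaginary units
`I, I'` exist, the two coefficients coincide. -/
theorem fcoeff_indep_of_isSlice (σ : Measure (Quaternion ℝ)) (hσ : IsSphereMeasure σ)
    (f : Quaternion ℝ → Quaternion ℝ) (hslice : IsSlice f)
    (hf : MemLp f 2 (bMeasure σ)) (n : ℤ) (I I' : Quaternion ℝ)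
    (hI : I ∈ Sph) (hI' : I' ∈ Sph)
    (hint : IntegrableOn (fun t => qexp (-(n * t)) I * f (qexp t I))
      (Ico (0 : ℝ) (2 * π)) volume)
    (hint' : IntegrableOn (fun t => qexp (-(n * t)) I' * f (qexp t I'))
      (Ico (0 : ℝ) (2 * π)) volume) :
    fcoeff f n I = fcoeff f n I' :=
  fcoeff_indep_of_isSlice_general f hslice n I I' hI hI' hint hint'
end
end
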